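/- Fix an integer n ≥ 1 and real numbers λ, ξ with ξ ≥ n·|λ|. Then the vector v₊ = (2a(a+n/2))^{−1/2}·( −i·√(((a+n/2−λ)(a−n/2−λ))/2), i·√(((a+n/2+λ)(a−n/2+λ))/2), √((a+n/2+λ)(a+n/2−λ)) )ᵀ ∈ ℂ³, where a = √(ξ+λ²+n²/4), has Euclidean norm 1 and satisfies m₁(λ,ξ)·v₊ = (n/2 + a)·v₊. -/

import Mathlib

open Complex Matrix

/-- The matrix `m₁ = m₁(λ,ξ)` of Lemma 5.2, with rows
`(−λ, 0, −i√((ξ−nλ)/2))`, `(0, λ, i√((ξ+nλ)/2))`, `(i√((ξ−nλ)/2), −i√((ξ+nλ)/2), n)`. -/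
noncomputable def m1 (n : ℕ) (lam ξ : ℝ) : Matrix (Fin 3) (Fin 3) ℂ :=
  !![(-lam : ℂ), 0, -Complex.I * (Real.sqrt ((ξ - n * lam) / 2) : ℂ);
     0, (lam : ℂ), Complex.I * (Real.sqrt ((ξ + n * lam) / 2) : ℂ);
     Complex.I * (Real.sqrt ((ξ - n * lam) / 2) : ℂ),
       -Complex.I * (Real.sqrt ((ξ + n * lam) / 2) : ℂ), (n : ℂ)]

/-- The unit eigenvector `v₊` of `m₁` for the eigenvalue `n/2 + a`, where
`a = √(ξ+λ²+n²/4)`. -/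
noncomputable def vplus (n : ℕ) (lam ξ : ℝ) : Fin 3 → ℂ :=
  ((Real.sqrt (2 * Real.sqrt (ξ + lam ^ 2 + (n : ℝ) ^ 2 / 4) *
      (Real.sqrt (ξ + lam ^ 2 + (n : ℝ) ^ 2 / 4) + n / 2)) : ℂ))⁻¹ •
    ![-Complex.I * (Real.sqrt ((Real.sqrt (ξ + lam ^ 2 + (n : ℝ) ^ 2 / 4) + n / 2 - lam) *
        (Real.sqrt (ξ + lam ^ 2 + (n : ℝ) ^ 2 / 4) - n / 2 - lam) / 2) : ℂ),
      Complex.I * (Real.sqrt ((Real.sqrt (ξ + lam ^ 2 + (n : ℝ) ^ 2 / 4) + n / 2 + lam) *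
        (Real.sqrt (ξ + lam ^ 2 + (n : ℝ) ^ 2 / 4) - n / 2 + lam) / 2) : ℂ),
      (Real.sqrt ((Real.sqrt (ξ + lam ^ 2 + (n : ℝ) ^ 2 / 4) + n / 2 + lam) *
        (Real.sqrt (ξ + lam ^ 2 + (n : ℝ) ^ 2 / 4) + n / 2 - lam)) : ℂ)]

/-- Lemma 5.2, eigenvector for `μ₊ = n/2 + a`: for `ξ ≥ n|λ|`, the
vector `v₊` has Euclidean norm `1` and `m₁ v₊ = (n/2 + a)·v₊`. -/


private lemma sqrt_mul_sqrt_key (a b c d : ℝ) (ha : 0 ≤ a) (hd : 0 ≤ d)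
    (h : a * b = d ^ 2 * c) : Real.sqrt a * Real.sqrt b = d * Real.sqrt c := by
  rw [← Real.sqrt_mul ha, h, Real.sqrt_mul (sq_nonneg d), Real.sqrt_sq hd]


set_option maxHeartbeats 1000000 in
theorem stmt_7 (n : ℕ) (hn : 1 ≤ n) (lam ξ : ℝ) (h : (n : ℝ) * |lam| ≤ ξ) :
    ‖(WithLp.equiv 2 (Fin 3 → ℂ)).symm (vplus n lam ξ)‖ = 1 ∧
    (m1 n lam ξ).mulVec (vplus n lam ξ) =
      ((n : ℂ) / 2 + (Real.sqrt (ξ + lam ^ 2 + (n : ℝ) ^ 2 / 4) : ℂ)) • vplus n lam ξ := by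
  have hn1 : (1:ℝ) ≤ n := by exact_mod_cast hn
  have habs : 0 ≤ |lam| := abs_nonneg lam
  have hξ : 0 ≤ ξ := le_trans (by positivity) h
  have h0 : (0:ℝ) ≤ ξ + lam ^ 2 + (n : ℝ) ^ 2 / 4 := by positivity
  set A := Real.sqrt (ξ + lam ^ 2 + (n : ℝ) ^ 2 / 4) with hAdef
  have hA0 : 0 ≤ A := Real.sqrt_nonneg _
  have hA2 : A ^ 2 = ξ + lam ^ 2 + (n : ℝ) ^ 2 / 4 := Real.sq_sqrt h0
  have hAge : |lam| + n / 2 ≤ A := by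
    rw [hAdef, Real.le_sqrt (by positivity) h0]
    nlinarith [_root_.sq_abs lam]
  have hlam1 : lam ≤ |lam| := le_abs_self lam
  have hlam2 : -lam ≤ |lam| := neg_le_abs lam
  have hp : 0 ≤ A + n / 2 - lam := by nlinarith
  have hq : 0 ≤ A - n / 2 - lam := by nlinarith
  have hr : 0 ≤ A + n / 2 + lam := by nlinarith
  have hs : 0 ≤ A - n / 2 + lam := by nlinarith
  have hqr : (ξ - n * lam) / 2 = (A - n / 2 - lam) * (A + n / 2 + lam) / 2 := by nlinarith [hA2]
  have hsp : (ξ + n * lam) / 2 = (A - n / 2 + lam) * (A + n / 2 - lam) / 2 := by nlinarith [hA2]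
  -- abbreviations
  have hA05 : (0:ℝ) < A := by nlinarith
  have hcpos : (0:ℝ) < Real.sqrt (2 * A * (A + n / 2)) := Real.sqrt_pos.2 (by nlinarith)
  set c := Real.sqrt (2 * A * (A + n / 2)) with hcdef
  have hc2 : c ^ 2 = 2 * A * (A + n / 2) := Real.sq_sqrt (by nlinarith)
  set P := Real.sqrt ((A + n / 2 - lam) * (A - n / 2 - lam) / 2) with hPdef
  set Q := Real.sqrt ((A + n / 2 + lam) * (A - n / 2 + lam) / 2) with hQdef
  set R := Real.sqrt ((A + n / 2 + lam) * (A + n / 2 - lam)) with hRdef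
  have hP0 : 0 ≤ P := Real.sqrt_nonneg _
  have hQ0 : 0 ≤ Q := Real.sqrt_nonneg _
  have hR0 : 0 ≤ R := Real.sqrt_nonneg _
  have hP2 : P ^ 2 = (A + n / 2 - lam) * (A - n / 2 - lam) / 2 :=
    Real.sq_sqrt (by positivity)
  have hQ2 : Q ^ 2 = (A + n / 2 + lam) * (A - n / 2 + lam) / 2 :=
    Real.sq_sqrt (by positivity)
  have hR2 : R ^ 2 = (A + n / 2 + lam) * (A + n / 2 - lam) :=
    Real.sq_sqrt (by positivity)
  have hv : vplus n lam ξ = ((c : ℂ))⁻¹ •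
      ![-Complex.I * (P : ℂ), Complex.I * (Q : ℂ), (R : ℂ)] := rfl
  -- real sqrt identities
  have E1 : Real.sqrt ((A - n / 2 - lam) * (A + n / 2 + lam) / 2) * R
      = (A + n / 2 + lam) * P := by
    rw [hRdef, hPdef]
    exact sqrt_mul_sqrt_key _ _ _ _ (by positivity) hr (by ring)
  have E2 : Real.sqrt ((A - n / 2 + lam) * (A + n / 2 - lam) / 2) * R
      = (A + n / 2 - lam) * Q := by
    rw [hRdef, hQdef]
    exact sqrt_mul_sqrt_key _ _ _ _ (by positivity) hp (by ring)
  have E3 : Real.sqrt ((A - n / 2 - lam) * (A + n / 2 + lam) / 2) * P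
      = ((A - n / 2 - lam) / 2) * R := by
    rw [hRdef, hPdef]
    exact sqrt_mul_sqrt_key _ _ _ _ (by positivity) (by positivity) (by ring)
  have E4 : Real.sqrt ((A - n / 2 + lam) * (A + n / 2 - lam) / 2) * Q
      = ((A - n / 2 + lam) / 2) * R := by
    rw [hRdef, hQdef]
    exact sqrt_mul_sqrt_key _ _ _ _ (by positivity) (by positivity) (by ring)
  have e1C : ((Real.sqrt ((A - n / 2 - lam) * (A + n / 2 + lam) / 2) : ℝ) : ℂ) * (R : ℂ)
      = ((A : ℂ) + (n : ℂ) / 2 + (lam : ℂ)) * (P : ℂ) := by have := congrArg (Complex.ofReal) E1; push_cast at this; exact_mod_cast this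
  have e2C : ((Real.sqrt ((A - n / 2 + lam) * (A + n / 2 - lam) / 2) : ℝ) : ℂ) * (R : ℂ)
      = ((A : ℂ) + (n : ℂ) / 2 - (lam : ℂ)) * (Q : ℂ) := by have := congrArg (Complex.ofReal) E2; push_cast at this; exact_mod_cast this
  have e3C : ((Real.sqrt ((A - n / 2 - lam) * (A + n / 2 + lam) / 2) : ℝ) : ℂ) * (P : ℂ)
      = (((A : ℂ) - (n : ℂ) / 2 - (lam : ℂ)) / 2) * (R : ℂ) := by have := congrArg (Complex.ofReal) E3; push_cast at this; exact_mod_cast this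
  have e4C : ((Real.sqrt ((A - n / 2 + lam) * (A + n / 2 - lam) / 2) : ℝ) : ℂ) * (Q : ℂ)
      = (((A : ℂ) - (n : ℂ) / 2 + (lam : ℂ)) / 2) * (R : ℂ) := by have := congrArg (Complex.ofReal) E4; push_cast at this; exact_mod_cast this
  have F1 : ((Real.sqrt ((A - n / 2 - lam) * (A + n / 2 + lam) / 2) : ℝ) : ℂ)
      = ((Real.sqrt ((A - n / 2 - lam) * (A + n / 2 + lam)) : ℝ) : ℂ) * ((Real.sqrt 2 : ℝ) : ℂ)⁻¹ := by
    rw [Real.sqrt_div (by positivity) 2]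
    push_cast
    ring
  have F2 : ((Real.sqrt ((A - n / 2 + lam) * (A + n / 2 - lam) / 2) : ℝ) : ℂ)
      = ((Real.sqrt ((A - n / 2 + lam) * (A + n / 2 - lam)) : ℝ) : ℂ) * ((Real.sqrt 2 : ℝ) : ℂ)⁻¹ := by
    rw [Real.sqrt_div (by positivity) 2]
    push_cast
    ring
  constructor
  · -- norm
    rw [EuclideanSpace.norm_eq]
    simp only [WithLp.equiv_symm_apply, WithLp.ofLp_toLp, hv, Pi.smul_apply, smul_eq_mul]
    rw [Fin.sum_univ_three]
    simp only [Matrix.cons_val_zero, Matrix.cons_val_one, Matrix.head_cons,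
      Matrix.cons_val_two, Matrix.tail_cons, norm_mul, norm_inv, Complex.norm_real,
      norm_neg, Complex.norm_I, Real.norm_eq_abs, _root_.abs_of_nonneg hP0, _root_.abs_of_nonneg hQ0,
      _root_.abs_of_nonneg hR0, _root_.abs_of_nonneg hcpos.le, one_mul, neg_mul]
    rw [show (c⁻¹ * P) ^ 2 + (c⁻¹ * Q) ^ 2 + (c⁻¹ * R) ^ 2
        = (P ^ 2 + Q ^ 2 + R ^ 2) / c ^ 2 by field_simp]
    rw [hP2, hQ2, hR2, hc2]
    rw [show (A + ↑n / 2 - lam) * (A - ↑n / 2 - lam) / 2 + (A + ↑n / 2 + lam) * (A - ↑n / 2 + lam) / 2 +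
        (A + ↑n / 2 + lam) * (A + ↑n / 2 - lam) = 2 * A * (A + ↑n / 2) by ring]
    rw [div_self (by nlinarith : (2:ℝ) * A * (A + ↑n / 2) ≠ 0), Real.sqrt_one]
  · -- eigenvector
    rw [hv, Matrix.mulVec_smul, smul_comm]
    congr 1
    funext i
    fin_cases i <;>
      simp [m1, hqr, hsp, Matrix.mulVec, dotProduct, Fin.sum_univ_three]
    · linear_combination (-Complex.I) * e1C + (Complex.I * (R:ℂ)) * F1
    · linear_combination Complex.I * e2C + (-Complex.I * (R:ℂ)) * F2
    · linear_combination e3C + e4C +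
        (-(((Real.sqrt ((A - n / 2 - lam) * (A + n / 2 + lam)) : ℝ) : ℂ) * ((Real.sqrt 2 : ℝ) : ℂ)⁻¹ * (P:ℂ))
          - ((Real.sqrt 2 : ℝ) : ℂ)⁻¹ * ((Real.sqrt ((A - n / 2 + lam) * (A + n / 2 - lam)) : ℝ) : ℂ) * (Q:ℂ)) * Complex.I_sq
        + (-(P:ℂ)) * F1 + (-(Q:ℂ)) * F2
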